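/- arXiv:2209.00516 — 3 statements merged into one kernel-verified Lean document; each statement's English description precedes it below -/
import Mathlib

section
/- Let G be a graph embedded in a surface of genus 2 with a complete left-walk, satisfying V(G) > 3 and the structural inequalities S ≤ 9/(V-3) and V ≤ S - 1. Then 5⅓ < S < 6¾, hence S = 6, hence V ≤ 27/6; combined with V > 26/6 this forces the total degree sum ∑deg(v) = 27 to be odd, a contradiction. Therefore V(G) ≤ 26/6 = 4⅓. -/
/-- Genus-2 bound: if `V = 2A/S > 3` is the average valence of a graph with `S`
vertices and `A` edges satisfying the structural inequalities `S ≤ 9/(V - 3)` and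
`V ≤ S - 1`, then `V ≤ 26/6 = 4⅓`. -/
theorem stmt_10 (S A : ℕ) (hS : 1 ≤ S) (V : ℚ)
    (hV : V = (2 * A : ℚ) / S)
    (h3 : 3 < V)
    (hstruct : (S : ℚ) ≤ 9 / (V - 3))
    (hcomplete : V ≤ (S : ℚ) - 1) :
    V ≤ 26 / 6 := by
  by_contra h
  push_neg at h
  have hVm : (0:ℚ) < V - 3 := by linarith
  rw [le_div_iff₀ hVm] at hstruct
  -- S ≤ 6
  have hS6 : S ≤ 6 := by
    by_contra hgt
    push_neg at hgt
    have : (7:ℚ) ≤ (S:ℚ) := by exact_mod_cast hgt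
    nlinarith
  -- S ≥ 6
  have hS6' : 6 ≤ S := by
    by_contra hlt
    push_neg at hlt
    have : (S:ℚ) ≤ 5 := by
      have : S ≤ 5 := by omega
      exact_mod_cast this
    linarith
  have hSeq : S = 6 := le_antisymm hS6 hS6'
  subst hSeq
  have hS0 : ((6:ℕ):ℚ) ≠ 0 := by norm_num
  have h2A : (2 * A : ℚ) = 6 * V := by
    field_simp at hV
    push_cast at hV ⊢
    linarith
  have hA : 14 ≤ A := by
    by_contra hlt
    push_neg at hlt
    have : (A:ℚ) ≤ 13 := by
      have : A ≤ 13 := by omega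
      exact_mod_cast this
    linarith
  have : (14:ℚ) ≤ (A:ℚ) := by exact_mod_cast hA
  push_cast at hstruct
  nlinarith
end

section
/- For every integer k ≥ 1 there exist 3k distinct nonzero integers α₁,β₁,γ₁,…,α_k,β_k,γ_k, all between 1 and 3k+1, such that no two of them sum to 6k+1 (equivalently exactly one of 3k, 3k+1 appears among them), and for each j: α_j = j, α_j < β_j < γ_j, and α_j + β_j = γ_j. -/
/-- start cell for difference `d`, case `k = 4*m` (Skolem, cells `[1, 8m]`). -/
def sb0 (m d : ℕ) : ℕ :=
  if d % 2 = 1 ∧ d + 3 ≤ 2*m then 6*m - 1 - d/2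
  else if d % 2 = 1 ∧ d + 1 = 2*m then 1
  else if d % 2 = 1 ∧ 2*m+1 ≤ d ∧ d + 3 ≤ 4*m then 2*m - d/2
  else if d % 2 = 1 ∧ d + 1 = 4*m then 3*m
  else if d % 2 = 0 ∧ d + 2 ≤ 2*m then 2*m - d/2
  else 6*m - d/2

/-- case `k = 4*m+1` (Skolem, cells `[1, 8m+2]`). -/
def sb1 (m d : ℕ) : ℕ :=
  if d % 2 = 1 ∧ d + 1 ≤ 2*m then 6*m+1 - d/2
  else if d % 2 = 1 ∧ 2*m+1 ≤ d ∧ d + 1 ≤ 4*m then 2*m+1 - d/2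
  else if d = 4*m+1 then 3*m+1
  else if d = 2*m then 1
  else if d % 2 = 0 ∧ d + 2 ≤ 2*m then 2*m+1 - d/2
  else 6*m+2 - d/2

/-- case `k = 4*m+2` (hooked, cells `[1, 8m+5]` avoiding `8m+4`). -/
def sb2 (m d : ℕ) : ℕ :=
  if d = 1 then m+1
  else if d % 2 = 1 ∧ d + 3 ≤ 4*m+2 then 6*m+3 - d/2
  else if d = 4*m+1 then 2*m+3
  else if d % 2 = 0 ∧ d ≤ 2*m then 2*m+3 - d/2
  else if d = 2*m+2 then 6*m+3
  else 2*m+2 - d/2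

/-- case `k = 4*m+3` (hooked, cells `[1, 8m+7]` avoiding `8m+6`). -/
def sb3 (m d : ℕ) : ℕ :=
  if d % 2 = 1 ∧ d ≤ 2*m+1 then 2*m+2 - d/2
  else if d % 2 = 1 ∧ d + 2 ≤ 4*m+3 then 6*m+4 - d/2
  else if d = 4*m+3 then m+1
  else if d % 2 = 0 ∧ d ≤ 2*m then 6*m+5 - d/2
  else if d = 2*m+2 then 6*m+5
  else 2*m+2 - d/2

set_option maxHeartbeats 1000000 in
lemma sb0_odd (m e : ℕ) (hm : 1 ≤ m) (he : 2*e+1 ≤ 4*m) : sb0 m (2*e+1) =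
    (if e + 2 ≤ m then 6*m - 1 - e else if e + 1 = m then 1 else if m ≤ e ∧ e + 2 ≤ 2*m then 2*m - e else if e + 1 = 2*m then 3*m else 6*m - e) := by
  unfold sb0; split_ifs <;> omega

set_option maxHeartbeats 1000000 in
lemma sb0_even (m e : ℕ) (hm : 1 ≤ m) (he : 2*e+2 ≤ 4*m) : sb0 m (2*e+2) =
    (if e + 2 ≤ m then 2*m - 1 - e else 6*m - 1 - e) := by
  unfold sb0; split_ifs <;> omega

set_option maxHeartbeats 1000000 in
lemma key0u1 (m d : ℕ) (hm : 1 ≤ m) (h1 : 1 ≤ d) (h2 : d ≤ 4*m) :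
    1 ≤ sb0 m d := by
  unfold sb0; split_ifs <;> omega

set_option maxHeartbeats 1000000 in
lemma key0u2 (m d : ℕ) (hm : 1 ≤ m) (h1 : 1 ≤ d) (h2 : d ≤ 4*m) :
    sb0 m d + d ≤ 8*m := by
  unfold sb0; split_ifs <;> omega

set_option maxHeartbeats 1000000 in
lemma key0u3 (m d : ℕ) (hm : 1 ≤ m) (h1 : 1 ≤ d) (h2 : d ≤ 4*m) :
    sb0 m d ≠ 8*m+1 := by
  unfold sb0; split_ifs <;> omega

set_option maxHeartbeats 1000000 in
lemma key0u4 (m d : ℕ) (hm : 1 ≤ m) (h1 : 1 ≤ d) (h2 : d ≤ 4*m) :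
    sb0 m d + d ≠ 8*m+1 := by
  unfold sb0; split_ifs <;> omega

set_option maxHeartbeats 1000000 in
lemma key0x (m d d' : ℕ) (hm : 1 ≤ m) (h1 : 1 ≤ d) (h2 : d ≤ 4*m) (h3 : 1 ≤ d') (h4 : d' ≤ 4*m) (hne : d ≠ d') :
    sb0 m d ≠ sb0 m d' + d' := by
  obtain ⟨e, rfl | rfl⟩ : ∃ e, d = 2*e+1 ∨ d = 2*e+2 := ⟨(d-1)/2, by omega⟩ <;>
    obtain ⟨f, rfl | rfl⟩ : ∃ f, d' = 2*f+1 ∨ d' = 2*f+2 := ⟨(d'-1)/2, by omega⟩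
  · rw [sb0_odd m e hm h2, sb0_odd m f hm h4]; split_ifs <;> omega
  · rw [sb0_odd m e hm h2, sb0_even m f hm h4]; split_ifs <;> omega
  · rw [sb0_even m e hm h2, sb0_odd m f hm h4]; split_ifs <;> omega
  · rw [sb0_even m e hm h2, sb0_even m f hm h4]; split_ifs <;> omega

set_option maxHeartbeats 1000000 in
lemma key0y (m d d' : ℕ) (hm : 1 ≤ m) (h1 : 1 ≤ d) (h2 : d ≤ 4*m) (h3 : 1 ≤ d') (h4 : d' ≤ 4*m) (hne : d ≠ d') :
    sb0 m d ≠ sb0 m d' := by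
  obtain ⟨e, rfl | rfl⟩ : ∃ e, d = 2*e+1 ∨ d = 2*e+2 := ⟨(d-1)/2, by omega⟩ <;>
    obtain ⟨f, rfl | rfl⟩ : ∃ f, d' = 2*f+1 ∨ d' = 2*f+2 := ⟨(d'-1)/2, by omega⟩
  · rw [sb0_odd m e hm h2, sb0_odd m f hm h4]; split_ifs <;> omega
  · rw [sb0_odd m e hm h2, sb0_even m f hm h4]; split_ifs <;> omega
  · rw [sb0_even m e hm h2, sb0_odd m f hm h4]; split_ifs <;> omega
  · rw [sb0_even m e hm h2, sb0_even m f hm h4]; split_ifs <;> omega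

set_option maxHeartbeats 1000000 in
lemma key0z (m d d' : ℕ) (hm : 1 ≤ m) (h1 : 1 ≤ d) (h2 : d ≤ 4*m) (h3 : 1 ≤ d') (h4 : d' ≤ 4*m) (hne : d ≠ d') :
    sb0 m d + d ≠ sb0 m d' + d' := by
  obtain ⟨e, rfl | rfl⟩ : ∃ e, d = 2*e+1 ∨ d = 2*e+2 := ⟨(d-1)/2, by omega⟩ <;>
    obtain ⟨f, rfl | rfl⟩ : ∃ f, d' = 2*f+1 ∨ d' = 2*f+2 := ⟨(d'-1)/2, by omega⟩
  · rw [sb0_odd m e hm h2, sb0_odd m f hm h4]; split_ifs <;> omega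
  · rw [sb0_odd m e hm h2, sb0_even m f hm h4]; split_ifs <;> omega
  · rw [sb0_even m e hm h2, sb0_odd m f hm h4]; split_ifs <;> omega
  · rw [sb0_even m e hm h2, sb0_even m f hm h4]; split_ifs <;> omega

set_option maxHeartbeats 1000000 in
lemma sb1_odd (m e : ℕ) (he : 2*e+1 ≤ 4*m+1) : sb1 m (2*e+1) =
    (if e + 1 ≤ m then 6*m + 1 - e else if m ≤ e ∧ e + 1 ≤ 2*m then 2*m + 1 - e else if e = 2*m then 3*m + 1 else 6*m + 2 - e) := by
  unfold sb1; split_ifs <;> omega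

set_option maxHeartbeats 1000000 in
lemma sb1_even (m e : ℕ) (he : 2*e+2 ≤ 4*m+1) : sb1 m (2*e+2) =
    (if e + 1 = m then 1 else if e + 2 ≤ m then 2*m - e else 6*m + 1 - e) := by
  unfold sb1; split_ifs <;> omega

set_option maxHeartbeats 1000000 in
lemma key1u1 (m d : ℕ) (h1 : 1 ≤ d) (h2 : d ≤ 4*m+1) :
    1 ≤ sb1 m d := by
  unfold sb1; split_ifs <;> omega

set_option maxHeartbeats 1000000 in
lemma key1u2 (m d : ℕ) (h1 : 1 ≤ d) (h2 : d ≤ 4*m+1) :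
    sb1 m d + d ≤ 8*m+2 := by
  unfold sb1; split_ifs <;> omega

set_option maxHeartbeats 1000000 in
lemma key1u3 (m d : ℕ) (h1 : 1 ≤ d) (h2 : d ≤ 4*m+1) :
    sb1 m d ≠ 8*m+3 := by
  unfold sb1; split_ifs <;> omega

set_option maxHeartbeats 1000000 in
lemma key1u4 (m d : ℕ) (h1 : 1 ≤ d) (h2 : d ≤ 4*m+1) :
    sb1 m d + d ≠ 8*m+3 := by
  unfold sb1; split_ifs <;> omega

set_option maxHeartbeats 1000000 in
lemma key1x (m d d' : ℕ) (h1 : 1 ≤ d) (h2 : d ≤ 4*m+1) (h3 : 1 ≤ d') (h4 : d' ≤ 4*m+1) (hne : d ≠ d') :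
    sb1 m d ≠ sb1 m d' + d' := by
  obtain ⟨e, rfl | rfl⟩ : ∃ e, d = 2*e+1 ∨ d = 2*e+2 := ⟨(d-1)/2, by omega⟩ <;>
    obtain ⟨f, rfl | rfl⟩ : ∃ f, d' = 2*f+1 ∨ d' = 2*f+2 := ⟨(d'-1)/2, by omega⟩
  · rw [sb1_odd m e h2, sb1_odd m f h4]; split_ifs <;> omega
  · rw [sb1_odd m e h2, sb1_even m f h4]; split_ifs <;> omega
  · rw [sb1_even m e h2, sb1_odd m f h4]; split_ifs <;> omega
  · rw [sb1_even m e h2, sb1_even m f h4]; split_ifs <;> omega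

set_option maxHeartbeats 1000000 in
lemma key1y (m d d' : ℕ) (h1 : 1 ≤ d) (h2 : d ≤ 4*m+1) (h3 : 1 ≤ d') (h4 : d' ≤ 4*m+1) (hne : d ≠ d') :
    sb1 m d ≠ sb1 m d' := by
  obtain ⟨e, rfl | rfl⟩ : ∃ e, d = 2*e+1 ∨ d = 2*e+2 := ⟨(d-1)/2, by omega⟩ <;>
    obtain ⟨f, rfl | rfl⟩ : ∃ f, d' = 2*f+1 ∨ d' = 2*f+2 := ⟨(d'-1)/2, by omega⟩
  · rw [sb1_odd m e h2, sb1_odd m f h4]; split_ifs <;> omega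
  · rw [sb1_odd m e h2, sb1_even m f h4]; split_ifs <;> omega
  · rw [sb1_even m e h2, sb1_odd m f h4]; split_ifs <;> omega
  · rw [sb1_even m e h2, sb1_even m f h4]; split_ifs <;> omega

set_option maxHeartbeats 1000000 in
lemma key1z (m d d' : ℕ) (h1 : 1 ≤ d) (h2 : d ≤ 4*m+1) (h3 : 1 ≤ d') (h4 : d' ≤ 4*m+1) (hne : d ≠ d') :
    sb1 m d + d ≠ sb1 m d' + d' := by
  obtain ⟨e, rfl | rfl⟩ : ∃ e, d = 2*e+1 ∨ d = 2*e+2 := ⟨(d-1)/2, by omega⟩ <;>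
    obtain ⟨f, rfl | rfl⟩ : ∃ f, d' = 2*f+1 ∨ d' = 2*f+2 := ⟨(d'-1)/2, by omega⟩
  · rw [sb1_odd m e h2, sb1_odd m f h4]; split_ifs <;> omega
  · rw [sb1_odd m e h2, sb1_even m f h4]; split_ifs <;> omega
  · rw [sb1_even m e h2, sb1_odd m f h4]; split_ifs <;> omega
  · rw [sb1_even m e h2, sb1_even m f h4]; split_ifs <;> omega

set_option maxHeartbeats 1000000 in
lemma sb2_odd (m e : ℕ) (he : 2*e+1 ≤ 4*m+2) : sb2 m (2*e+1) =
    (if e = 0 then m + 1 else if e + 1 ≤ 2*m then 6*m + 3 - e else if e = 2*m then 2*m + 3 else 2*m + 2 - e) := by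
  unfold sb2; split_ifs <;> omega

set_option maxHeartbeats 1000000 in
lemma sb2_even (m e : ℕ) (he : 2*e+2 ≤ 4*m+2) : sb2 m (2*e+2) =
    (if e + 1 ≤ m then 2*m + 2 - e else if e = m then 6*m + 3 else 2*m + 1 - e) := by
  unfold sb2; split_ifs <;> omega

set_option maxHeartbeats 1000000 in
lemma key2u1 (m d : ℕ) (h1 : 1 ≤ d) (h2 : d ≤ 4*m+2) :
    1 ≤ sb2 m d := by
  unfold sb2; split_ifs <;> omega

set_option maxHeartbeats 1000000 in
lemma key2u2 (m d : ℕ) (h1 : 1 ≤ d) (h2 : d ≤ 4*m+2) :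
    sb2 m d + d ≤ 8*m+5 := by
  unfold sb2; split_ifs <;> omega

set_option maxHeartbeats 1000000 in
lemma key2u3 (m d : ℕ) (h1 : 1 ≤ d) (h2 : d ≤ 4*m+2) :
    sb2 m d ≠ 8*m+4 := by
  unfold sb2; split_ifs <;> omega

set_option maxHeartbeats 1000000 in
lemma key2u4 (m d : ℕ) (h1 : 1 ≤ d) (h2 : d ≤ 4*m+2) :
    sb2 m d + d ≠ 8*m+4 := by
  unfold sb2; split_ifs <;> omega

set_option maxHeartbeats 1000000 in
lemma key2x (m d d' : ℕ) (h1 : 1 ≤ d) (h2 : d ≤ 4*m+2) (h3 : 1 ≤ d') (h4 : d' ≤ 4*m+2) (hne : d ≠ d') :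
    sb2 m d ≠ sb2 m d' + d' := by
  obtain ⟨e, rfl | rfl⟩ : ∃ e, d = 2*e+1 ∨ d = 2*e+2 := ⟨(d-1)/2, by omega⟩ <;>
    obtain ⟨f, rfl | rfl⟩ : ∃ f, d' = 2*f+1 ∨ d' = 2*f+2 := ⟨(d'-1)/2, by omega⟩
  · rw [sb2_odd m e h2, sb2_odd m f h4]; split_ifs <;> omega
  · rw [sb2_odd m e h2, sb2_even m f h4]; split_ifs <;> omega
  · rw [sb2_even m e h2, sb2_odd m f h4]; split_ifs <;> omega
  · rw [sb2_even m e h2, sb2_even m f h4]; split_ifs <;> omega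

set_option maxHeartbeats 1000000 in
lemma key2y (m d d' : ℕ) (h1 : 1 ≤ d) (h2 : d ≤ 4*m+2) (h3 : 1 ≤ d') (h4 : d' ≤ 4*m+2) (hne : d ≠ d') :
    sb2 m d ≠ sb2 m d' := by
  obtain ⟨e, rfl | rfl⟩ : ∃ e, d = 2*e+1 ∨ d = 2*e+2 := ⟨(d-1)/2, by omega⟩ <;>
    obtain ⟨f, rfl | rfl⟩ : ∃ f, d' = 2*f+1 ∨ d' = 2*f+2 := ⟨(d'-1)/2, by omega⟩
  · rw [sb2_odd m e h2, sb2_odd m f h4]; split_ifs <;> omega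
  · rw [sb2_odd m e h2, sb2_even m f h4]; split_ifs <;> omega
  · rw [sb2_even m e h2, sb2_odd m f h4]; split_ifs <;> omega
  · rw [sb2_even m e h2, sb2_even m f h4]; split_ifs <;> omega

set_option maxHeartbeats 1000000 in
lemma key2z (m d d' : ℕ) (h1 : 1 ≤ d) (h2 : d ≤ 4*m+2) (h3 : 1 ≤ d') (h4 : d' ≤ 4*m+2) (hne : d ≠ d') :
    sb2 m d + d ≠ sb2 m d' + d' := by
  obtain ⟨e, rfl | rfl⟩ : ∃ e, d = 2*e+1 ∨ d = 2*e+2 := ⟨(d-1)/2, by omega⟩ <;>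
    obtain ⟨f, rfl | rfl⟩ : ∃ f, d' = 2*f+1 ∨ d' = 2*f+2 := ⟨(d'-1)/2, by omega⟩
  · rw [sb2_odd m e h2, sb2_odd m f h4]; split_ifs <;> omega
  · rw [sb2_odd m e h2, sb2_even m f h4]; split_ifs <;> omega
  · rw [sb2_even m e h2, sb2_odd m f h4]; split_ifs <;> omega
  · rw [sb2_even m e h2, sb2_even m f h4]; split_ifs <;> omega

set_option maxHeartbeats 1000000 in
lemma sb3_odd (m e : ℕ) (he : 2*e+1 ≤ 4*m+3) : sb3 m (2*e+1) =
    (if e ≤ m then 2*m + 2 - e else if m + 1 ≤ e ∧ e ≤ 2*m then 6*m + 4 - e else if e = 2*m + 1 then m + 1 else 2*m + 2 - e) := by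
  unfold sb3; split_ifs <;> omega

set_option maxHeartbeats 1000000 in
lemma sb3_even (m e : ℕ) (he : 2*e+2 ≤ 4*m+3) : sb3 m (2*e+2) =
    (if e + 1 ≤ m then 6*m + 4 - e else if e = m then 6*m + 5 else 2*m + 1 - e) := by
  unfold sb3; split_ifs <;> omega

set_option maxHeartbeats 1000000 in
lemma key3u1 (m d : ℕ) (h1 : 1 ≤ d) (h2 : d ≤ 4*m+3) :
    1 ≤ sb3 m d := by
  unfold sb3; split_ifs <;> omega

set_option maxHeartbeats 1000000 in
lemma key3u2 (m d : ℕ) (h1 : 1 ≤ d) (h2 : d ≤ 4*m+3) :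
    sb3 m d + d ≤ 8*m+7 := by
  unfold sb3; split_ifs <;> omega

set_option maxHeartbeats 1000000 in
lemma key3u3 (m d : ℕ) (h1 : 1 ≤ d) (h2 : d ≤ 4*m+3) :
    sb3 m d ≠ 8*m+6 := by
  unfold sb3; split_ifs <;> omega

set_option maxHeartbeats 1000000 in
lemma key3u4 (m d : ℕ) (h1 : 1 ≤ d) (h2 : d ≤ 4*m+3) :
    sb3 m d + d ≠ 8*m+6 := by
  unfold sb3; split_ifs <;> omega

set_option maxHeartbeats 1000000 in
lemma key3x (m d d' : ℕ) (h1 : 1 ≤ d) (h2 : d ≤ 4*m+3) (h3 : 1 ≤ d') (h4 : d' ≤ 4*m+3) (hne : d ≠ d') :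
    sb3 m d ≠ sb3 m d' + d' := by
  obtain ⟨e, rfl | rfl⟩ : ∃ e, d = 2*e+1 ∨ d = 2*e+2 := ⟨(d-1)/2, by omega⟩ <;>
    obtain ⟨f, rfl | rfl⟩ : ∃ f, d' = 2*f+1 ∨ d' = 2*f+2 := ⟨(d'-1)/2, by omega⟩
  · rw [sb3_odd m e h2, sb3_odd m f h4]; split_ifs <;> omega
  · rw [sb3_odd m e h2, sb3_even m f h4]; split_ifs <;> omega
  · rw [sb3_even m e h2, sb3_odd m f h4]; split_ifs <;> omega
  · rw [sb3_even m e h2, sb3_even m f h4]; split_ifs <;> omega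

set_option maxHeartbeats 1000000 in
lemma key3y (m d d' : ℕ) (h1 : 1 ≤ d) (h2 : d ≤ 4*m+3) (h3 : 1 ≤ d') (h4 : d' ≤ 4*m+3) (hne : d ≠ d') :
    sb3 m d ≠ sb3 m d' := by
  obtain ⟨e, rfl | rfl⟩ : ∃ e, d = 2*e+1 ∨ d = 2*e+2 := ⟨(d-1)/2, by omega⟩ <;>
    obtain ⟨f, rfl | rfl⟩ : ∃ f, d' = 2*f+1 ∨ d' = 2*f+2 := ⟨(d'-1)/2, by omega⟩
  · rw [sb3_odd m e h2, sb3_odd m f h4]; split_ifs <;> omega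
  · rw [sb3_odd m e h2, sb3_even m f h4]; split_ifs <;> omega
  · rw [sb3_even m e h2, sb3_odd m f h4]; split_ifs <;> omega
  · rw [sb3_even m e h2, sb3_even m f h4]; split_ifs <;> omega

set_option maxHeartbeats 1000000 in
lemma key3z (m d d' : ℕ) (h1 : 1 ≤ d) (h2 : d ≤ 4*m+3) (h3 : 1 ≤ d') (h4 : d' ≤ 4*m+3) (hne : d ≠ d') :
    sb3 m d + d ≠ sb3 m d' + d' := by
  obtain ⟨e, rfl | rfl⟩ : ∃ e, d = 2*e+1 ∨ d = 2*e+2 := ⟨(d-1)/2, by omega⟩ <;>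
    obtain ⟨f, rfl | rfl⟩ : ∃ f, d' = 2*f+1 ∨ d' = 2*f+2 := ⟨(d'-1)/2, by omega⟩
  · rw [sb3_odd m e h2, sb3_odd m f h4]; split_ifs <;> omega
  · rw [sb3_odd m e h2, sb3_even m f h4]; split_ifs <;> omega
  · rw [sb3_even m e h2, sb3_odd m f h4]; split_ifs <;> omega
  · rw [sb3_even m e h2, sb3_even m f h4]; split_ifs <;> omega

theorem skolem_assemble (k : ℕ) (hk : 1 ≤ k) (b : ℕ → ℕ) (hole : ℕ)
    (hh1 : 2*k ≤ hole) (hh2 : hole ≤ 2*k+1)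
    (H : ∀ d d', 1 ≤ d → d ≤ k → 1 ≤ d' → d' ≤ k →
      1 ≤ b d ∧ b d + d ≤ 2*k+1 ∧ b d ≠ hole ∧ b d + d ≠ hole ∧
      b d ≠ b d' + d' ∧ (d ≠ d' → b d ≠ b d') ∧ (d ≠ d' → b d + d ≠ b d' + d')) :
    ∃ α β γ : Fin k → ℕ,
      (∀ j, α j = (j : ℕ) + 1) ∧
      (∀ j, α j < β j) ∧ (∀ j, β j < γ j) ∧
      (∀ j, α j + β j = γ j) ∧
      (∀ j, 1 ≤ α j ∧ γ j ≤ 3 * k + 1) ∧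
      ((Finset.univ.image α ∪ Finset.univ.image β ∪ Finset.univ.image γ).card = 3 * k) ∧
      (∀ j j' : Fin k, ∀ x ∈ ({α j, β j, γ j} : Finset ℕ),
        ∀ y ∈ ({α j', β j', γ j'} : Finset ℕ), x + y ≠ 6 * k + 1) := by
  set A : Fin k → ℕ := fun j => (j : ℕ) + 1 with hA
  set B : Fin k → ℕ := fun j => k + b ((j : ℕ) + 1) with hB
  set C : Fin k → ℕ := fun j => k + b ((j : ℕ) + 1) + ((j : ℕ) + 1) with hC
  have hAj : ∀ j : Fin k, A j = (j : ℕ) + 1 := fun j => rfl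
  have hBj : ∀ j : Fin k, B j = k + b ((j : ℕ) + 1) := fun j => rfl
  have hCj : ∀ j : Fin k, C j = k + b ((j : ℕ) + 1) + ((j : ℕ) + 1) := fun j => rfl
  have hd : ∀ j : Fin k, 1 ≤ (j : ℕ) + 1 ∧ (j : ℕ) + 1 ≤ k := by
    intro j; have := j.isLt; omega
  have Hj : ∀ j : Fin k, 1 ≤ b ((j : ℕ) + 1) ∧ b ((j : ℕ) + 1) + ((j : ℕ) + 1) ≤ 2*k+1 ∧
      b ((j : ℕ) + 1) ≠ hole ∧ b ((j : ℕ) + 1) + ((j : ℕ) + 1) ≠ hole := by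
    intro j
    obtain ⟨a1, a2, a3, a4, -⟩ := H ((j : ℕ) + 1) ((j : ℕ) + 1)
      (hd j).1 (hd j).2 (hd j).1 (hd j).2
    exact ⟨a1, a2, a3, a4⟩
  refine ⟨A, B, C, hAj, ?_, ?_, ?_, ?_, ?_, ?_⟩
  · intro j; rw [hAj, hBj]; have := (hd j).2; have := (Hj j).1; omega
  · intro j; rw [hBj, hCj]; omega
  · intro j; rw [hAj, hBj, hCj]; omega
  · intro j; rw [hAj, hCj]; have := (Hj j).2.1; omega
  · -- cardinality
    have hAinj : Function.Injective A := by
      intro i j h; rw [hAj i, hAj j] at h; exact Fin.val_injective (by omega)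
    have hBinj : Function.Injective B := by
      intro i j h
      rw [hBj i, hBj j] at h
      by_contra hne
      have hvne : (i : ℕ) + 1 ≠ (j : ℕ) + 1 := fun hv => hne (Fin.val_injective (by omega))
      obtain ⟨-, -, -, -, -, a6, -⟩ := H ((i : ℕ) + 1) ((j : ℕ) + 1)
        (hd i).1 (hd i).2 (hd j).1 (hd j).2
      exact a6 hvne (by omega)
    have hCinj : Function.Injective C := by
      intro i j h
      rw [hCj i, hCj j] at h
      by_contra hne
      have hvne : (i : ℕ) + 1 ≠ (j : ℕ) + 1 := fun hv => hne (Fin.val_injective (by omega))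
      obtain ⟨-, -, -, -, -, -, a7⟩ := H ((i : ℕ) + 1) ((j : ℕ) + 1)
        (hd i).1 (hd i).2 (hd j).1 (hd j).2
      exact a7 hvne (by omega)
    have hAB : Disjoint (Finset.univ.image A) (Finset.univ.image B) := by
      rw [Finset.disjoint_left]
      intro x hx hx'
      simp only [Finset.mem_image, Finset.mem_univ, true_and] at hx hx'
      obtain ⟨i, hi⟩ := hx
      obtain ⟨j, hj⟩ := hx'
      rw [hAj] at hi; rw [hBj] at hj
      have := (hd i).2; have := (Hj j).1; omega
    have hABC : Disjoint (Finset.univ.image A ∪ Finset.univ.image B)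
        (Finset.univ.image C) := by
      rw [Finset.disjoint_left]
      intro x hx hx'
      simp only [Finset.mem_union, Finset.mem_image, Finset.mem_univ, true_and] at hx hx'
      obtain ⟨i, hi⟩ := hx'
      rw [hCj] at hi
      rcases hx with ⟨j, hj⟩ | ⟨j, hj⟩
      · rw [hAj] at hj; have := (hd j).2; have := (Hj i).1; omega
      · rw [hBj] at hj
        obtain ⟨-, -, -, -, a5, -, -⟩ := H ((j : ℕ) + 1) ((i : ℕ) + 1)
          (hd j).1 (hd j).2 (hd i).1 (hd i).2
        omega
    rw [Finset.card_union_of_disjoint hABC, Finset.card_union_of_disjoint hAB,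
      Finset.card_image_of_injective _ hAinj, Finset.card_image_of_injective _ hBinj,
      Finset.card_image_of_injective _ hCinj, Finset.card_univ, Fintype.card_fin]
    omega
  · -- no two sum to 6k+1
    have key : ∀ (i : Fin k) (v : ℕ), v ∈ ({A i, B i, C i} : Finset ℕ) →
        v ≤ 3*k + 1 ∧ v ≠ k + hole := by
      intro i v hv
      simp only [Finset.mem_insert, Finset.mem_singleton] at hv
      have h1 := (Hj i).1
      have h2 := (Hj i).2.1
      have h3 := (Hj i).2.2.1
      have h4 := (Hj i).2.2.2
      have h5 := (hd i).2
      rcases hv with rfl | rfl | rfl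
      · rw [hAj]; omega
      · rw [hBj]; omega
      · rw [hCj]; omega
    intro j j' x hx y hy
    have hx' := key j x hx
    have hy' := key j' y hy
    omega





/-- Skolem/O'Keefe lemma: for every `k ≥ 1` there exist `3k` pairwise distinct
nonzero integers `α_j = j`, `β_j`, `γ_j` (for `1 ≤ j ≤ k`), all lying in
`[1, 3k+1]`, no two of which sum to `6k+1`, with `α_j < β_j < γ_j` and
`α_j + β_j = γ_j` for each `j`. -/
theorem stmt_11 (k : ℕ) (hk : 1 ≤ k) :
    ∃ α β γ : Fin k → ℕ,
      (∀ j, α j = (j : ℕ) + 1) ∧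
      (∀ j, α j < β j) ∧ (∀ j, β j < γ j) ∧
      (∀ j, α j + β j = γ j) ∧
      (∀ j, 1 ≤ α j ∧ γ j ≤ 3 * k + 1) ∧
      ((Finset.univ.image α ∪ Finset.univ.image β ∪ Finset.univ.image γ).card = 3 * k) ∧
      (∀ j j' : Fin k, ∀ x ∈ ({α j, β j, γ j} : Finset ℕ),
        ∀ y ∈ ({α j', β j', γ j'} : Finset ℕ), x + y ≠ 6 * k + 1) := by
  have hdm := Nat.div_add_mod k 4
  set m := k / 4 with hm
  have h4 : k % 4 = 0 ∨ k % 4 = 1 ∨ k % 4 = 2 ∨ k % 4 = 3 := by omega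
  rcases h4 with h | h | h | h
  · refine skolem_assemble k hk (sb0 m) (2*k+1) (by omega) (by omega) ?_
    intro d d' h1 h2 h3 h4'
    have a1 := key0u1 m d (by omega) h1 (by omega)
    have a2 := key0u2 m d (by omega) h1 (by omega)
    have a3 := key0u3 m d (by omega) h1 (by omega)
    have a4 := key0u4 m d (by omega) h1 (by omega)
    rcases eq_or_ne d d' with rfl | hne
    · exact ⟨a1, by omega, by omega, by omega, by omega, fun hne => absurd rfl hne,
        fun hne => absurd rfl hne⟩
    · exact ⟨a1, by omega, by omega, by omega,
        key0x m d d' (by omega) h1 (by omega) h3 (by omega) hne,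
        fun _ => key0y m d d' (by omega) h1 (by omega) h3 (by omega) hne,
        fun _ => key0z m d d' (by omega) h1 (by omega) h3 (by omega) hne⟩
  · refine skolem_assemble k hk (sb1 m) (2*k+1) (by omega) (by omega) ?_
    intro d d' h1 h2 h3 h4'
    have a1 := key1u1 m d h1 (by omega)
    have a2 := key1u2 m d h1 (by omega)
    have a3 := key1u3 m d h1 (by omega)
    have a4 := key1u4 m d h1 (by omega)
    rcases eq_or_ne d d' with rfl | hne
    · exact ⟨a1, by omega, by omega, by omega, by omega, fun hne => absurd rfl hne,
        fun hne => absurd rfl hne⟩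
    · exact ⟨a1, by omega, by omega, by omega,
        key1x m d d' h1 (by omega) h3 (by omega) hne,
        fun _ => key1y m d d' h1 (by omega) h3 (by omega) hne,
        fun _ => key1z m d d' h1 (by omega) h3 (by omega) hne⟩
  · refine skolem_assemble k hk (sb2 m) (2*k) (by omega) (by omega) ?_
    intro d d' h1 h2 h3 h4'
    have a1 := key2u1 m d h1 (by omega)
    have a2 := key2u2 m d h1 (by omega)
    have a3 := key2u3 m d h1 (by omega)
    have a4 := key2u4 m d h1 (by omega)
    rcases eq_or_ne d d' with rfl | hne
    · exact ⟨a1, by omega, by omega, by omega, by omega, fun hne => absurd rfl hne,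
        fun hne => absurd rfl hne⟩
    · exact ⟨a1, by omega, by omega, by omega,
        key2x m d d' h1 (by omega) h3 (by omega) hne,
        fun _ => key2y m d d' h1 (by omega) h3 (by omega) hne,
        fun _ => key2z m d d' h1 (by omega) h3 (by omega) hne⟩
  · refine skolem_assemble k hk (sb3 m) (2*k) (by omega) (by omega) ?_
    intro d d' h1 h2 h3 h4'
    have a1 := key3u1 m d h1 (by omega)
    have a2 := key3u2 m d h1 (by omega)
    have a3 := key3u3 m d h1 (by omega)
    have a4 := key3u4 m d h1 (by omega)
    rcases eq_or_ne d d' with rfl | hne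
    · exact ⟨a1, by omega, by omega, by omega, by omega, fun hne => absurd rfl hne,
        fun hne => absurd rfl hne⟩
    · exact ⟨a1, by omega, by omega, by omega,
        key3x m d d' h1 (by omega) h3 (by omega) hne,
        fun _ => key3y m d d' h1 (by omega) h3 (by omega) hne,
        fun _ => key3z m d d' h1 (by omega) h3 (by omega) hne⟩
end

section
/- Define g(S) = (S-1)(S-3)/6 for S ≡ 7 (mod 12). Assuming there exists x* such that every interval [x, x + x^{3/5}] with x ≥ x* contains a prime ≡ 7 (mod 12), there exists g* ≥ 7^{10} such that for every S' ≡ 7 (mod 12) prime with g' := g(S') > g*, there is a prime S'' ≡ 7 (mod 12) with g'' := g(S'') satisfying g' < g'' < g' + (g')^{9/10}. -/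
set_option maxHeartbeats 1600000 in
/-- Assuming a Baker–Harman–Pintz-type statement (every interval `[x, x + x^{3/5}]`
with `x` large contains a prime `≡ 7 (mod 12)`), there is `g* ≥ 7^10` such that for
every prime `S' ≡ 7 (mod 12)` with `g' := (S'-1)(S'-3)/6 > g*` there is a prime
`S'' ≡ 7 (mod 12)` whose genus `g'' := (S''-1)(S''-3)/6` satisfies
`g' < g'' < g' + (g')^{9/10}`. -/
theorem stmt_15
    (hBHP : ∃ xstar : ℝ, ∀ x : ℝ, xstar ≤ x →
      ∃ p : ℕ, Nat.Prime p ∧ p % 12 = 7 ∧ x ≤ (p : ℝ) ∧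
        (p : ℝ) ≤ x + x ^ ((3 : ℝ) / 5)) :
    ∃ gstar : ℕ, 7 ^ 10 ≤ gstar ∧
      ∀ S' : ℕ, Nat.Prime S' → S' % 12 = 7 → gstar < (S' - 1) * (S' - 3) / 6 →
        ∃ S'' : ℕ, Nat.Prime S'' ∧ S'' % 12 = 7 ∧
          (S' - 1) * (S' - 3) / 6 < (S'' - 1) * (S'' - 3) / 6 ∧
          ((S'' - 1) * (S'' - 3) / 6 : ℝ) <
            ((S' - 1) * (S' - 3) / 6 : ℕ) +
              (((S' - 1) * (S' - 3) / 6 : ℕ) : ℝ) ^ ((9 : ℝ) / 10) := by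
  obtain ⟨xstar, hxstar⟩ := hBHP
  set X : ℝ := max xstar (10 ^ 7) with hX
  refine ⟨max (7 ^ 10) (⌈X⌉₊ ^ 2 + 1), le_max_left _ _, ?_⟩
  intro S' hS'p hS'7 hg
  obtain ⟨k, hk⟩ : ∃ k, S' = 12 * k + 7 := ⟨S' / 12, by omega⟩
  have h6 : (S' - 1) * (S' - 3) = 6 * ((2 * k + 1) * (12 * k + 4)) := by
    have h1 : S' - 1 = 12 * k + 6 := by omega
    have h3 : S' - 3 = 12 * k + 4 := by omega
    rw [h1, h3]; ring
  have hg' : (S' - 1) * (S' - 3) / 6 = (2 * k + 1) * (12 * k + 4) := by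
    rw [h6, Nat.mul_div_cancel_left _ (by norm_num)]
  set a : ℝ := (S' : ℝ) with ha
  clear_value a
  have ha7 : a = 12 * (k : ℝ) + 7 := by rw [ha, hk]; push_cast; ring
  have hgle : ((S' - 1) * (S' - 3) / 6 : ℕ) ≤ S' ^ 2 := by
    calc (S' - 1) * (S' - 3) / 6 ≤ (S' - 1) * (S' - 3) := Nat.div_le_self _ _
    _ ≤ S' * S' := Nat.mul_le_mul (by omega) (by omega)
    _ = S' ^ 2 := (sq S').symm
  have hgstar : ⌈X⌉₊ ^ 2 < (S' - 1) * (S' - 3) / 6 :=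
    lt_of_lt_of_le (Nat.lt_succ_self _) (le_of_lt (lt_of_le_of_lt (le_max_right _ _) hg))
  have hceil : ⌈X⌉₊ < S' := by
    have h2 : ⌈X⌉₊ ^ 2 < S' ^ 2 := lt_of_lt_of_le hgstar hgle
    exact lt_of_pow_lt_pow_left₀ 2 (Nat.zero_le _) h2
  have haX : X < a := by
    rw [ha]; exact lt_of_le_of_lt (Nat.le_ceil X) (Nat.cast_lt.mpr hceil)
  have haC : (10 ^ 7 : ℝ) < a := lt_of_le_of_lt (le_max_right _ _) haX
  have ha0 : (0 : ℝ) < a := by linarith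
  have ha1 : (1 : ℝ) ≤ a := by linarith
  clear_value X
  obtain ⟨p, hpp, hp7, hpl, hpu⟩ := hxstar (a + 1)
    (by have := le_max_left xstar (10 ^ 7 : ℝ); linarith)
  obtain ⟨m, hm⟩ : ∃ m, p = 12 * m + 7 := ⟨p / 12, by omega⟩
  have h6' : (p - 1) * (p - 3) = 6 * ((2 * m + 1) * (12 * m + 4)) := by
    have h1 : p - 1 = 12 * m + 6 := by omega
    have h3 : p - 3 = 12 * m + 4 := by omega
    rw [h1, h3]; ring
  have hg'' : (p - 1) * (p - 3) / 6 = (2 * m + 1) * (12 * m + 4) := by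
    rw [h6', Nat.mul_div_cancel_left _ (by norm_num)]
  set b : ℝ := (p : ℝ) with hb
  clear_value b
  have hba : a + 1 ≤ b := hpl
  have hkm : k < m := by
    have h1 : (S' : ℝ) + 1 ≤ (p : ℝ) := by rw [← ha, ← hb]; linarith
    have h2 : S' + 1 ≤ p := by exact_mod_cast h1
    omega
  refine ⟨p, hpp, hp7, ?_, ?_⟩
  · rw [hg', hg'']
    nlinarith [hkm]
  · -- real inequality
    have hcast' : (((S' - 1) * (S' - 3) / 6 : ℕ) : ℝ) = (a - 1) * (a - 3) / 6 := by
      rw [hg']; push_cast; rw [ha7]; ring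
    rw [hcast', ← hb]
    set G : ℝ := (a - 1) * (a - 3) / 6 with hG
    set c : ℝ := a ^ ((3 : ℝ) / 5) with hc
    set d : ℝ := a ^ ((1 : ℝ) / 5) with hd
    clear_value G c d
    have hc1 : 1 ≤ c := by rw [hc]; exact Real.one_le_rpow ha1 (by norm_num)
    have hc0 : 0 < c := by linarith
    have hca : c ≤ a := by
      rw [hc]
      calc a ^ ((3:ℝ)/5) ≤ a ^ (1 : ℝ) := Real.rpow_le_rpow_of_exponent_le ha1 (by norm_num)
      _ = a := Real.rpow_one a
    have hup : (a + 1) ^ ((3 : ℝ) / 5) ≤ 2 * c := by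
      have h1 : (a + 1) ^ ((3 : ℝ) / 5) ≤ (2 * a) ^ ((3 : ℝ) / 5) :=
        Real.rpow_le_rpow (by linarith) (by linarith) (by norm_num)
      have h2 : ((2 : ℝ) * a) ^ ((3 : ℝ) / 5) = 2 ^ ((3 : ℝ) / 5) * c := by
        rw [hc, Real.mul_rpow (by norm_num) ha0.le]
      have h3 : (2 : ℝ) ^ ((3 : ℝ) / 5) ≤ 2 := by
        calc (2 : ℝ) ^ ((3 : ℝ) / 5) ≤ 2 ^ (1 : ℝ) :=
          Real.rpow_le_rpow_of_exponent_le (by norm_num) (by norm_num)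
        _ = 2 := Real.rpow_one 2
      have h4 : (2 : ℝ) ^ ((3 : ℝ) / 5) * c ≤ 2 * c :=
        mul_le_mul_of_nonneg_right h3 hc0.le
      linarith [h2 ▸ h1]
    have hbu : b ≤ a + 1 + 2 * c := by linarith
    have hd24 : (24 : ℝ) < d := by
      have h1 : ((24 : ℝ) ^ (5 : ℕ)) ^ ((1 : ℝ) / 5) = 24 := by
        rw [← Real.rpow_natCast (24 : ℝ) 5, ← Real.rpow_mul (by norm_num)]
        norm_num
      have h2 : ((24 : ℝ) ^ (5 : ℕ)) ^ ((1 : ℝ) / 5) < a ^ ((1 : ℝ) / 5) :=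
        Real.rpow_lt_rpow (by positivity) (by norm_num; linarith) (by norm_num)
      rw [h1] at h2; rw [hd]; exact h2
    have hG2 : a ^ 2 / 12 ≤ G := by
      rw [hG]; clear * - haC; nlinarith [sq_nonneg (a - 4), haC]
    have key : 2 * a * c < G ^ ((9 : ℝ) / 10) := by
      have hG0 : (0 : ℝ) ≤ a ^ 2 / 12 := by positivity
      have h1 : (a ^ 2 / 12 : ℝ) ^ ((9 : ℝ) / 10) ≤ G ^ ((9 : ℝ) / 10) :=
        Real.rpow_le_rpow hG0 hG2 (by norm_num)
      have h2 : (a ^ 2 / 12 : ℝ) ^ ((9 : ℝ) / 10)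
          = a ^ ((9 : ℝ) / 5) / 12 ^ ((9 : ℝ) / 10) := by
        rw [Real.div_rpow (by positivity) (by norm_num), ← Real.rpow_natCast a 2,
          ← Real.rpow_mul ha0.le]
        norm_num
      have h3 : a ^ ((9 : ℝ) / 5) = a * c * d := by
        rw [show ((9 : ℝ) / 5) = 1 + 3 / 5 + 1 / 5 by norm_num, Real.rpow_add ha0,
          Real.rpow_add ha0, Real.rpow_one, hc, hd]
      have h4 : (12 : ℝ) ^ ((9 : ℝ) / 10) ≤ 12 := by
        calc (12 : ℝ) ^ ((9 : ℝ) / 10) ≤ 12 ^ (1 : ℝ) :=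
          Real.rpow_le_rpow_of_exponent_le (by norm_num) (by norm_num)
        _ = 12 := Real.rpow_one 12
      have h5 : 2 * a * c < a * c * d / 12 := by
        have h := mul_pos (sub_pos.mpr hd24) (mul_pos ha0 hc0)
        clear * - h
        nlinarith [h]
      have h6 : a * c * d / 12 ≤ a ^ ((9 : ℝ) / 5) / 12 ^ ((9 : ℝ) / 10) := by
        rw [h3]
        gcongr
      rw [h2] at h1
      linarith
    have main : (b - 1) * (b - 3) / 6 ≤ G + 2 * a * c := by
      rw [hG]
      have m1 := mul_self_le_mul_self (by linarith : (0:ℝ) ≤ b) hbu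
      have m2 := mul_nonneg (sub_nonneg.2 hca) hc0.le
      have m3 := mul_nonneg (sub_nonneg.2 hc1) ha0.le
      have m4 := hba
      have m5 := haC
      clear * - m1 m2 m3 m4 m5
      nlinarith [m1, m2, m3, m4, m5]
    linarith
end
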